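/- arXiv:2306.13453 — 2 statements merged into one kernel-verified Lean document; each statement's English description precedes it below -/
import Mathlib

section
/- Let ν be a Borel probability measure on ℝ, let a < b and c > 0 be such that ν(A) ≥ c·λ(A) for every Borel set A ⊆ [a,b], where λ is Lebesgue measure. Let r ≥ 1 be an integer and let ε satisfy 0 < 3ε < b − a. Then the r-fold convolution ν^{⋆r} (i.e., the law of V₁ + ⋯ + V_r where V₁, …, V_r are i.i.d. with law ν, equivalently the pushforward of the r-fold product measure ν^{⊗r} under the sum map) satisfies ν^{⋆r}(A) ≥ c^r·ε^{r−1}·λ(A) for every Borel set A ⊆ [r(a+ε) − ε, r(b−ε) + ε]. -/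
/-!
Write `λ_I` for Lebesgue measure restricted to an interval `I`. The hypothesis says
`ν ≥ c • λ_[a,b]`, and convolution is monotone and commutes with scalars, so it suffices
to bound `λ_[a,b] ∗ λ_[a',b']` from below. Its density at `s` is the length of
`[a,b] ∩ [s-b', s-a']`, which is at least `ε` whenever both intervals have length at least `ε`
and `s ∈ [a+a'+ε, b+b'-ε]`. Induction on `r` with `ν^{⋆(r+1)} = ν ∗ ν^{⋆r}` then multiplies the
constant by `c ε` and shrinks the interval by `ε` at each step.
-/

open MeasureTheory

/-- The `r`-fold convolution of a Borel measure `ν` on `ℝ`: the pushforward of the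
`r`-fold product measure under the sum map. -/
noncomputable def convPow (ν : Measure ℝ) (r : ℕ) : Measure ℝ :=
  (Measure.pi (fun _ : Fin r => ν)).map (fun x => ∑ i, x i)

open Set

namespace MeasureTheory.Measure

theorem conv_mono {M : Type*} [AddMonoid M] [MeasurableSpace M] [MeasurableAdd₂ M]
    {μ μ' ν ν' : Measure M} [SFinite ν'] (hμ : μ ≤ μ') (hν : ν ≤ ν') : μ ∗ ν ≤ μ' ∗ ν' :=
  map_mono (prod_mono hμ hν) measurable_add

theorem restrict_le_iff_forall_subset {α : Type*} [MeasurableSpace α] {μ ν : Measure α}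
    {s : Set α} (hs : MeasurableSet s) :
    μ.restrict s ≤ ν ↔ ∀ t ⊆ s, MeasurableSet t → μ t ≤ ν t := by
  refine ⟨fun h t hts ht => ?_, fun h => Measure.le_iff.2 fun t ht => ?_⟩
  · simpa [restrict_apply ht, inter_eq_self_of_subset_left hts] using h t
  · rw [restrict_apply ht]
    exact (h _ inter_subset_right (ht.inter hs)).trans (measure_mono inter_subset_left)

end MeasureTheory.Measure

open Measure

theorem ofReal_le_lconvolution_indicator_Icc {a b a' b' ε s : ℝ} (hI : ε ≤ b - a)
    (hJ : ε ≤ b' - a') (hs : s ∈ Icc (a + a' + ε) (b + b' - ε)) :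
    ENNReal.ofReal ε ≤ ((Icc a b).indicator 1 ⋆ₗ (Icc a' b').indicator 1) s := by
  have hreflect : ∀ y, (Icc a' b').indicator (1 : ℝ → ENNReal) (-y + s)
      = (Icc (s - b') (s - a')).indicator 1 y := fun y => by
    simp only [indicator_apply, mem_Icc]
    congr 1
    exact propext ⟨fun h => ⟨by linarith, by linarith⟩, fun h => ⟨by linarith, by linarith⟩⟩
  simp only [lconvolution_def, hreflect]
  rw [← Pi.mul_def, ← inter_indicator_one,
    lintegral_indicator_one (measurableSet_Icc.inter measurableSet_Icc), Icc_inter_Icc,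
    Real.volume_Icc]
  exact ENNReal.ofReal_le_ofReal (by grind)

theorem ofReal_smul_restrict_Icc_le_conv {a b a' b' ε : ℝ} (hI : ε ≤ b - a)
    (hJ : ε ≤ b' - a') :
    ENNReal.ofReal ε • volume.restrict (Icc (a + a' + ε) (b + b' - ε))
      ≤ volume.restrict (Icc a b) ∗ volume.restrict (Icc a' b') := by
  rw [← withDensity_indicator_one (measurableSet_Icc : MeasurableSet (Icc a b)),
    ← withDensity_indicator_one (measurableSet_Icc : MeasurableSet (Icc a' b')),
    conv_withDensity_eq_lconvolution (measurable_one.indicator measurableSet_Icc)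
      (measurable_one.indicator measurableSet_Icc), ← withDensity_const]
  calc (volume.restrict _).withDensity _
      ≤ (volume.restrict _).withDensity ((Icc a b).indicator 1 ⋆ₗ (Icc a' b').indicator 1) :=
        withDensity_mono <| ae_restrict_of_forall_mem measurableSet_Icc fun s hs =>
          ofReal_le_lconvolution_indicator_Icc hI hJ hs
    _ ≤ _ := by rw [← restrict_withDensity measurableSet_Icc]; exact restrict_le_self

instance sFinite_convPow (ν : Measure ℝ) [SigmaFinite ν] (r : ℕ) : SFinite (convPow ν r) := by
  unfold convPow; infer_instance

theorem convPow_one (ν : Measure ℝ) [SigmaFinite ν] : convPow ν 1 = ν := by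
  have hsum : (fun x : Fin 1 → ℝ => ∑ i, x i) = MeasurableEquiv.funUnique (Fin 1) ℝ := by
    funext x
    simp [MeasurableEquiv.funUnique]
  rw [convPow, hsum]
  exact (measurePreserving_funUnique ν (Fin 1)).map_eq

theorem convPow_succ (ν : Measure ℝ) [SigmaFinite ν] (r : ℕ) :
    convPow ν (r + 1) = ν ∗ convPow ν r := by
  set e := MeasurableEquiv.piFinSuccAbove (fun _ : Fin (r + 1) => ℝ) 0
  have hsum : (fun x : Fin (r + 1) → ℝ => ∑ i, x i)
      = (fun p : ℝ × ℝ => p.1 + p.2) ∘ Prod.map id (fun x : Fin r → ℝ => ∑ i, x i) ∘ e := by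
    funext x
    simp [e, MeasurableEquiv.piFinSuccAbove, Fin.sum_univ_succAbove _ 0, Fin.tail]
  rw [convPow, hsum, ← map_map (by fun_prop) (by fun_prop), ← map_map (by fun_prop) e.measurable,
    (measurePreserving_piFinSuccAbove (fun _ : Fin (r + 1) => ν) 0).map_eq,
    ← map_prod_map _ _ measurable_id (by fun_prop), map_id]
  rfl

theorem ofReal_smul_restrict_Icc_le_convPow_succ {ν : Measure ℝ} [SigmaFinite ν] {a b c ε : ℝ}
    (hc : 0 ≤ c) (hε : 0 ≤ ε) (hab : 2 * ε ≤ b - a)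
    (hν : ENNReal.ofReal c • volume.restrict (Icc a b) ≤ ν) (r : ℕ) :
    ENNReal.ofReal (c ^ (r + 1) * ε ^ r) •
        volume.restrict (Icc ((r + 1) * (a + ε) - ε) ((r + 1) * (b - ε) + ε))
      ≤ convPow ν (r + 1) := by
  induction r with
  | zero => simpa [convPow_one] using hν
  | succ r ih =>
    have hconst : ENNReal.ofReal (c ^ (r + 1 + 1) * ε ^ (r + 1))
        = ENNReal.ofReal c * ENNReal.ofReal (c ^ (r + 1) * ε ^ r) * ENNReal.ofReal ε := by
      rw [← ENNReal.ofReal_mul hc, ← ENNReal.ofReal_mul (by positivity)]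
      ring_nf
    have hIcc : Icc ((((r + 1 : ℕ) : ℝ) + 1) * (a + ε) - ε) ((((r + 1 : ℕ) : ℝ) + 1) * (b - ε) + ε)
        = Icc (a + ((r + 1) * (a + ε) - ε) + ε) (b + ((r + 1) * (b - ε) + ε) - ε) := by
      push_cast; congr 1 <;> ring
    have hwidth : ε ≤ ((r + 1) * (b - ε) + ε) - ((r + 1) * (a + ε) - ε) := by
      nlinarith
    calc _ = (ENNReal.ofReal c * ENNReal.ofReal (c ^ (r + 1) * ε ^ r)) •
          ENNReal.ofReal ε • volume.restrict (Icc (a + ((r + 1) * (a + ε) - ε) + ε)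
            (b + ((r + 1) * (b - ε) + ε) - ε)) := by rw [hconst, hIcc, mul_smul]
      _ ≤ (ENNReal.ofReal c * ENNReal.ofReal (c ^ (r + 1) * ε ^ r)) •
          (volume.restrict (Icc a b) ∗ volume.restrict (Icc _ _)) := by
        gcongr
        exact ofReal_smul_restrict_Icc_le_conv (by linarith) hwidth
      _ = (ENNReal.ofReal c • volume.restrict (Icc a b)) ∗
          (ENNReal.ofReal (c ^ (r + 1) * ε ^ r) • volume.restrict (Icc _ _)) := by
        rw [conv_smul_left, conv_smul_right, smul_smul]
      _ ≤ ν ∗ convPow ν (r + 1) := conv_mono hν ih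
      _ = convPow ν (r + 1 + 1) := (convPow_succ ν _).symm

theorem stmt_2_general (ν : Measure ℝ) [IsProbabilityMeasure ν]
    (a b c : ℝ) (hc : 0 < c)
    (hν : ∀ A : Set ℝ, A ⊆ Set.Icc a b → MeasurableSet A →
      ENNReal.ofReal c * volume A ≤ ν A)
    (r : ℕ) (hr : 1 ≤ r) (ε : ℝ) (hε0 : 0 < ε) (hε : 3 * ε < b - a) :
    ∀ A : Set ℝ, A ⊆ Set.Icc ((r : ℝ) * (a + ε) - ε) ((r : ℝ) * (b - ε) + ε) →
      MeasurableSet A →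
      ENNReal.ofReal (c ^ r * ε ^ (r - 1)) * volume A ≤ convPow ν r A := by
  obtain ⟨r, rfl⟩ := Nat.exists_eq_add_of_le' hr
  have hν' : ENNReal.ofReal c • volume.restrict (Icc a b) ≤ ν := by
    rw [← restrict_smul, restrict_le_iff_forall_subset measurableSet_Icc]
    exact hν
  have key := ofReal_smul_restrict_Icc_le_convPow_succ hc.le hε0.le (by linarith) hν' r
  rw [← restrict_smul, restrict_le_iff_forall_subset measurableSet_Icc] at key
  push_cast
  simpa using key

/-- If `ν ≥ c·λ` on Borel subsets of `[a,b]`, `r ≥ 1` and `0 < 3ε < b-a`, then the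
`r`-fold convolution `ν^{⋆r} ≥ cʳ·ε^{r-1}·λ` on Borel subsets of
`[r(a+ε)-ε, r(b-ε)+ε]`. -/
theorem stmt_2 (ν : Measure ℝ) [IsProbabilityMeasure ν]
    (a b c : ℝ) (hab : a < b) (hc : 0 < c)
    (hν : ∀ A : Set ℝ, A ⊆ Set.Icc a b → MeasurableSet A →
      ENNReal.ofReal c * volume A ≤ ν A)
    (r : ℕ) (hr : 1 ≤ r) (ε : ℝ) (hε0 : 0 < ε) (hε : 3 * ε < b - a) :
    ∀ A : Set ℝ, A ⊆ Set.Icc ((r : ℝ) * (a + ε) - ε) ((r : ℝ) * (b - ε) + ε) →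
      MeasurableSet A →
      ENNReal.ofReal (c ^ r * ε ^ (r - 1)) * volume A ≤ convPow ν r A :=
  stmt_2_general ν a b c hc hν r hr ε hε0 hε
end

section
/- Let 𝕋 be a set, let L, C, U, ε, δ ≥ 0, and let p ≥ 1 be a real number. Let k : ℝ² → (𝕋 → ℝ) satisfy: (i) |k(x)(t) − k(x')(t)| ≤ L·‖x − x'‖_∞ for all x, x' ∈ ℝ² and all t ∈ 𝕋; (ii) |k((r,r))(t)| ≤ C for all r ∈ ℝ and t ∈ 𝕋. Let ι be a finite index set and let x, y : ι → ℝ² with x_i = (b_i, d_i), y_i = (b_i', d_i') satisfying b_i ≤ d_i ≤ b_i + U, b_i' ≤ d_i' ≤ b_i' + U, and ‖x_i − y_i‖_∞ ≤ δ for every i. Then for every t ∈ 𝕋: |Σ_i w_ε(x_i)^p·k(x_i)(t) − Σ_i w_ε(y_i)^p·k(y_i)(t)| ≤ (L·Σ_i w_ε(x_i)^p + 2p(LU + C)·(Σ_i w_ε(x_i)^{p−1} + Σ_i w_ε(y_i)^{p−1}))·δ. -/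
/-- The `ε`-truncated persistence weight of a point `(b,d) ∈ ℝ²`:
`w_ε(b,d) = max (d - b - ε) 0`. -/
noncomputable def wtrunc (ε : ℝ) (z : ℝ × ℝ) : ℝ := max (z.2 - z.1 - ε) 0

private lemma rpow_sub_rpow_le_aux {a b p : ℝ} (hb : 0 ≤ b) (hba : b ≤ a) (hp : 1 ≤ p) :
    a ^ p - b ^ p ≤ p * a ^ (p - 1) * (a - b) := by
  have ha : 0 ≤ a := hb.trans hba
  rcases eq_or_lt_of_le hba with rfl | h
  · simp
  · obtain ⟨c, hc, hc'⟩ := exists_hasDerivAt_eq_slope (fun z => z ^ p)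
      (fun z => p * z ^ (p - 1)) h
      (by
        apply ContinuousOn.rpow_const continuousOn_id
        intro z hz
        right; linarith)
      (fun z hz => Real.hasDerivAt_rpow_const (Or.inr hp))
    have hc0 : 0 ≤ c := le_of_lt (lt_of_le_of_lt hb hc.1)
    have hca : c ≤ a := le_of_lt hc.2
    have : (a ^ p - b ^ p) / (a - b) = p * c ^ (p - 1) := hc'.symm
    have hmono : c ^ (p - 1) ≤ a ^ (p - 1) :=
      Real.rpow_le_rpow hc0 hca (by linarith)
    have hab : 0 < a - b := by linarith
    rw [div_eq_iff hab.ne'] at this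
    rw [this]
    have : p * c ^ (p - 1) ≤ p * a ^ (p - 1) := by
      apply mul_le_mul_of_nonneg_left hmono (by linarith)
    nlinarith

private lemma abs_rpow_sub_rpow_le {a b p : ℝ} (ha : 0 ≤ a) (hb : 0 ≤ b) (hp : 1 ≤ p) :
    |a ^ p - b ^ p| ≤ p * (a ^ (p - 1) + b ^ (p - 1)) * |a - b| := by
  have hap : 0 ≤ a ^ (p - 1) := Real.rpow_nonneg ha _
  have hbp : 0 ≤ b ^ (p - 1) := Real.rpow_nonneg hb _
  rcases le_total b a with h | h
  · rw [abs_of_nonneg (by nlinarith [Real.rpow_le_rpow hb h (le_trans zero_le_one hp)] :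
        (0:ℝ) ≤ a ^ p - b ^ p), abs_of_nonneg (by linarith)]
    have := rpow_sub_rpow_le_aux hb h hp
    nlinarith [mul_nonneg (mul_nonneg (by linarith : (0:ℝ) ≤ p) hbp)
      (by linarith : (0:ℝ) ≤ a - b)]
  · have haux : a ^ p ≤ b ^ p := Real.rpow_le_rpow ha h (le_trans zero_le_one hp)
    rw [abs_sub_comm, abs_of_nonneg (by linarith), abs_sub_comm (a:ℝ) b,
      abs_of_nonneg (by linarith)]
    have := rpow_sub_rpow_le_aux ha h hp
    nlinarith [mul_nonneg (mul_nonneg (by linarith : (0:ℝ) ≤ p) hap)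
      (by linarith : (0:ℝ) ≤ b - a)]

/-- Continuity bound for linear functionals of persistence diagrams
(per-matching form). -/
theorem stmt_8 {𝕋 : Type*} (L C U ε δ p : ℝ)
    (hL : 0 ≤ L) (hC : 0 ≤ C) (hU : 0 ≤ U) (hε : 0 ≤ ε) (hδ : 0 ≤ δ) (hp : 1 ≤ p)
    (k : ℝ × ℝ → 𝕋 → ℝ)
    (hkLip : ∀ x x' : ℝ × ℝ, ∀ t : 𝕋,
      |k x t - k x' t| ≤ L * max |x.1 - x'.1| |x.2 - x'.2|)
    (hkDiag : ∀ r : ℝ, ∀ t : 𝕋, |k (r, r) t| ≤ C)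
    {ι : Type*} [Fintype ι] (x y : ι → ℝ × ℝ)
    (hx : ∀ i, (x i).1 ≤ (x i).2 ∧ (x i).2 ≤ (x i).1 + U)
    (hy : ∀ i, (y i).1 ≤ (y i).2 ∧ (y i).2 ≤ (y i).1 + U)
    (hxy : ∀ i, max |(x i).1 - (y i).1| |(x i).2 - (y i).2| ≤ δ)
    (t : 𝕋) :
    |∑ i, wtrunc ε (x i) ^ p * k (x i) t - ∑ i, wtrunc ε (y i) ^ p * k (y i) t|
      ≤ (L * ∑ i, wtrunc ε (x i) ^ p
          + 2 * p * (L * U + C) *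
            (∑ i, wtrunc ε (x i) ^ (p - 1) + ∑ i, wtrunc ε (y i) ^ (p - 1))) * δ := by
  have key : ∀ i, |wtrunc ε (x i) ^ p * k (x i) t - wtrunc ε (y i) ^ p * k (y i) t|
      ≤ L * (wtrunc ε (x i) ^ p) * δ
        + 2 * p * (L * U + C) * (wtrunc ε (x i) ^ (p - 1) + wtrunc ε (y i) ^ (p - 1)) * δ := by
    intro i
    set a := wtrunc ε (x i) with ha_def
    set b := wtrunc ε (y i) with hb_def
    have ha : 0 ≤ a := le_max_right _ _
    have hb : 0 ≤ b := le_max_right _ _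
    have hap : 0 ≤ a ^ p := Real.rpow_nonneg ha _
    have hap1 : 0 ≤ a ^ (p - 1) := Real.rpow_nonneg ha _
    have hbp1 : 0 ≤ b ^ (p - 1) := Real.rpow_nonneg hb _
    -- bound on |k (y i) t|
    have hky : |k (y i) t| ≤ L * U + C := by
      have h1 := hkLip (y i) ((y i).1, (y i).1) t
      have h2 := hkDiag (y i).1 t
      have h3 : max |(y i).1 - (y i).1| |(y i).2 - (y i).1| = (y i).2 - (y i).1 := by
        rw [sub_self, abs_zero, abs_of_nonneg (by linarith [(hy i).1])]
        exact max_eq_right (by linarith [(hy i).1])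
      rw [h3] at h1
      have h4 : (y i).2 - (y i).1 ≤ U := by linarith [(hy i).2]
      have h5 : L * ((y i).2 - (y i).1) ≤ L * U := mul_le_mul_of_nonneg_left h4 hL
      have h6 := abs_sub_abs_le_abs_sub (k (y i) t) (k ((y i).1, (y i).1) t)
      linarith
    -- Lipschitz bound on k
    have hkxy : |k (x i) t - k (y i) t| ≤ L * δ := by
      calc |k (x i) t - k (y i) t| ≤ L * max |(x i).1 - (y i).1| |(x i).2 - (y i).2| :=
            hkLip (x i) (y i) t
        _ ≤ L * δ := mul_le_mul_of_nonneg_left (hxy i) hL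
    -- wtrunc is 2-Lipschitz
    have hab : |a - b| ≤ 2 * δ := by
      have h1 : |(x i).1 - (y i).1| ≤ δ := le_trans (le_max_left _ _) (hxy i)
      have h2 : |(x i).2 - (y i).2| ≤ δ := le_trans (le_max_right _ _) (hxy i)
      have := abs_max_sub_max_le_abs ((x i).2 - (x i).1 - ε) ((y i).2 - (y i).1 - ε) 0
      rw [ha_def, hb_def]
      unfold wtrunc
      calc |max ((x i).2 - (x i).1 - ε) 0 - max ((y i).2 - (y i).1 - ε) 0|
          ≤ |((x i).2 - (x i).1 - ε) - ((y i).2 - (y i).1 - ε)| := this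
        _ ≤ |(x i).2 - (y i).2| + |(x i).1 - (y i).1| := by
            rw [show ((x i).2 - (x i).1 - ε) - ((y i).2 - (y i).1 - ε)
              = ((x i).2 - (y i).2) - ((x i).1 - (y i).1) by ring]
            exact abs_sub _ _
        _ ≤ 2 * δ := by linarith
    -- power difference bound
    have hpow : |a ^ p - b ^ p| ≤ p * (a ^ (p - 1) + b ^ (p - 1)) * (2 * δ) := by
      calc |a ^ p - b ^ p| ≤ p * (a ^ (p - 1) + b ^ (p - 1)) * |a - b| :=
            abs_rpow_sub_rpow_le ha hb hp
        _ ≤ p * (a ^ (p - 1) + b ^ (p - 1)) * (2 * δ) := by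
            apply mul_le_mul_of_nonneg_left hab
            positivity
    calc |a ^ p * k (x i) t - b ^ p * k (y i) t|
        = |a ^ p * (k (x i) t - k (y i) t) + (a ^ p - b ^ p) * k (y i) t| := by ring_nf
      _ ≤ |a ^ p * (k (x i) t - k (y i) t)| + |(a ^ p - b ^ p) * k (y i) t| := abs_add_le _ _
      _ = a ^ p * |k (x i) t - k (y i) t| + |a ^ p - b ^ p| * |k (y i) t| := by
          rw [abs_mul, abs_mul, abs_of_nonneg hap]
      _ ≤ a ^ p * (L * δ) + (p * (a ^ (p - 1) + b ^ (p - 1)) * (2 * δ)) * (L * U + C) := by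
          apply add_le_add
          · exact mul_le_mul_of_nonneg_left hkxy hap
          · exact mul_le_mul hpow hky (abs_nonneg _) (by positivity)
      _ = L * a ^ p * δ + 2 * p * (L * U + C) * (a ^ (p - 1) + b ^ (p - 1)) * δ := by ring
  calc |∑ i, wtrunc ε (x i) ^ p * k (x i) t - ∑ i, wtrunc ε (y i) ^ p * k (y i) t|
      = |∑ i, (wtrunc ε (x i) ^ p * k (x i) t - wtrunc ε (y i) ^ p * k (y i) t)| := by
        rw [Finset.sum_sub_distrib]
    _ ≤ ∑ i, |wtrunc ε (x i) ^ p * k (x i) t - wtrunc ε (y i) ^ p * k (y i) t| :=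
        Finset.abs_sum_le_sum_abs _ _
    _ ≤ ∑ i, (L * (wtrunc ε (x i) ^ p) * δ
          + 2 * p * (L * U + C) * (wtrunc ε (x i) ^ (p - 1) + wtrunc ε (y i) ^ (p - 1)) * δ) :=
        Finset.sum_le_sum fun i _ => key i
    _ = ∑ i, ((L * δ) * wtrunc ε (x i) ^ p
          + ((2 * p * (L * U + C) * δ) * wtrunc ε (x i) ^ (p - 1)
          + (2 * p * (L * U + C) * δ) * wtrunc ε (y i) ^ (p - 1))) := by
        apply Finset.sum_congr rfl; intros; ring
    _ = (L * δ) * (∑ i, wtrunc ε (x i) ^ p)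
          + ((2 * p * (L * U + C) * δ) * (∑ i, wtrunc ε (x i) ^ (p - 1))
          + (2 * p * (L * U + C) * δ) * (∑ i, wtrunc ε (y i) ^ (p - 1))) := by
        rw [Finset.sum_add_distrib, Finset.sum_add_distrib,
          ← Finset.mul_sum, ← Finset.mul_sum, ← Finset.mul_sum]
    _ = (L * ∑ i, wtrunc ε (x i) ^ p
          + 2 * p * (L * U + C) *
            (∑ i, wtrunc ε (x i) ^ (p - 1) + ∑ i, wtrunc ε (y i) ^ (p - 1))) * δ := by
        ring
end
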